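/- arXiv:1404.3143 — 3 statements merged into one kernel-verified Lean document; each statement's English description precedes it below -/
import Mathlib

section
/- Let E be an exceptional object in a k-linear triangulated category T with finite-dimensional Hom spaces. Then the smallest triangulated subcategory of T generated by E is admissible: for any X ∈ T, the object obtained as the cone of the canonical evaluation map ⊕_t Hom(E, X[t]) ⊗ E[-t] → X lies in the right orthogonal E^⊥. -/
/-!
Write `S` for the finite set of `t` with `Hom(E⟦t⟧, X) ≠ 0`. For each `t ∈ S`, `End(E⟦t⟧) ≅ End E`
is a division ring, so `Hom(E⟦t⟧, X)` has a finite basis `φₜ` over it; let `A` be the direct sum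
of one copy of `E⟦t⟧` per element of `φₜ`, `t ∈ S`, and `ev : A ⟶ X` the sum of the `φₜ`.
As `Hom(E⟦s⟧, E⟦t⟧) = 0` for `s ≠ t`, composition with `ev` is bijective on `Hom(E⟦t⟧, -)` for
every `t`, and the long exact `Hom(E⟦t⟧, -)`-sequence of a triangle `A ⟶ X ⟶ B ⟶ A⟦1⟧` then
gives `Hom(E⟦t⟧, B) = 0`.
-/

open CategoryTheory Category Limits Pretriangulated

universe v u

variable {C : Type u} [Category.{v} C] [Preadditive C] [HasZeroObject C]
  [HasShift C ℤ] [∀ n : ℤ, (CategoryTheory.shiftFunctor C n).Additive] [Pretriangulated C]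

/-- left orthogonal of a set of objects -/
def leftOrthogonal (S : Set C) : Set C :=
  {X | ∀ A ∈ S, ∀ t : ℤ, ∀ f : X ⟶ A⟦t⟧, f = 0}

/-- right orthogonal of a set of objects -/
def rightOrthogonal (S : Set C) : Set C :=
  {X | ∀ A ∈ S, ∀ t : ℤ, ∀ f : A⟦t⟧ ⟶ X, f = 0}

/-- objects of the smallest triangulated subcategory containing `S` -/
inductive isGen (S : Set C) : C → Prop
  | of {X : C} (hX : X ∈ S) : isGen S X
  | zero {X : C} (hX : Limits.IsZero X) : isGen S X
  | iso {X Y : C} (e : X ≅ Y) (hX : isGen S X) : isGen S Y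
  | shift {X : C} (n : ℤ) (hX : isGen S X) : isGen S (X⟦n⟧)
  | ext (T : Triangle C) (hT : T ∈ distTriang C) (h₁ : isGen S T.obj₁)
      (h₃ : isGen S T.obj₃) : isGen S T.obj₂

/-- a full triangulated subcategory given by a set of objects -/
structure IsTriangulatedSub (A : Set C) : Prop where
  zero : ∀ X : C, Limits.IsZero X → X ∈ A
  iso : ∀ {X Y : C}, (X ≅ Y) → X ∈ A → Y ∈ A
  shift : ∀ X ∈ A, ∀ n : ℤ, X⟦n⟧ ∈ A
  ext : ∀ T : Triangle C, (T ∈ distTriang C) → T.obj₁ ∈ A → T.obj₃ ∈ A → T.obj₂ ∈ A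

/-- admissibility: the inclusion functor has both adjoints -/
def isAdmissible (A : Set C) : Prop :=
  (ObjectProperty.ι (C := C) (· ∈ A)).IsLeftAdjoint ∧
  (ObjectProperty.ι (C := C) (· ∈ A)).IsRightAdjoint

variable (k : Type*) [Field k] [Linear k C]

set_option linter.unusedSectionVars false

open ZeroObject in
instance (S : Set C) : ObjectProperty.IsTriangulated (isGen S) where
  exists_zero := ⟨0, isZero_zero C, isGen.zero (isZero_zero C)⟩
  isStableUnderShiftBy n := ⟨fun _ hX => isGen.shift n hX⟩
  ext₂' T hT h₁ h₃ := ObjectProperty.le_isoClosure _ _ (isGen.ext T hT h₁ h₃)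

instance (S : Set C) : ObjectProperty.IsClosedUnderIsomorphisms (isGen S) :=
  ⟨isGen.iso⟩

lemma isGen.biproduct {S : Set C} {J : Type*} [Finite J] {P : J → C}
    (h : ∀ j, isGen S (P j)) : isGen S (⨁ P) :=
  ObjectProperty.prop_of_iso (isGen S) (biproduct.isoProduct P).symm
    (ObjectProperty.prop_product (isGen S) h)

lemma eq_zero_of_forall_eq_zero_shift {E X : C} {s : ℤ} (h : ∀ g : E ⟶ X⟦-s⟧, g = 0)
    (f : E⟦s⟧ ⟶ X) : f = 0 := by
  let e := (shiftFunctorCompIsoId C (-s) s (by omega)).app X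
  obtain ⟨g, hg⟩ := (shiftFunctor C s).map_surjective (f ≫ e.inv)
  rw [← cancel_mono e.inv, ← hg, h g, Functor.map_zero, zero_comp]

lemma eq_zero_of_comp_shift_map_eq_zero {Y A X : C} {f : A ⟶ X} {n : ℤ}
    (hf : ∀ ψ : Y⟦-n⟧ ⟶ A, ψ ≫ f = 0 → ψ = 0) (ψ : Y ⟶ A⟦n⟧) (h : ψ ≫ f⟦n⟧' = 0) :
    ψ = 0 := by
  let e := (shiftFunctorCompIsoId C (-n) n (by omega)).app Y
  obtain ⟨ψ', hψ'⟩ := (shiftFunctor C n).map_surjective (e.hom ≫ ψ)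
  have : ψ' ≫ f = 0 := (shiftFunctor C n).map_injective (by simp [hψ', h])
  rw [← cancel_epi e.hom, ← hψ', hf ψ' this, Functor.map_zero, comp_zero]

lemma shift_hom_eq_zero_of_ne {E : C} (hexc₁ : ∀ t : ℤ, t ≠ 0 → ∀ f : E ⟶ E⟦t⟧, f = 0)
    {s t : ℤ} (hst : s ≠ t) (f : E⟦s⟧ ⟶ E⟦t⟧) : f = 0 :=
  eq_zero_of_forall_eq_zero_shift (fun g => by
    rw [← cancel_mono ((shiftFunctorAdd C t (-s)).app E).inv,
      hexc₁ (t + -s) (by omega) (g ≫ _), zero_comp]) f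

lemma shift_exists_comp_eq_id_of_ne_zero {E : C} (hexc₀ : ∀ f : E ⟶ E, ∃ c : k, f = c • 𝟙 E)
    {s : ℤ} (f : E⟦s⟧ ⟶ E⟦s⟧) (hf : f ≠ 0) : ∃ u, u ≫ f = 𝟙 _ := by
  obtain ⟨g, rfl⟩ := (shiftFunctor C s).map_surjective f
  obtain ⟨c, rfl⟩ := hexc₀ g
  have hc : c ≠ 0 := by
    rintro rfl
    exact hf (by simp)
  refine ⟨(c⁻¹ • 𝟙 E)⟦s⟧', ?_⟩
  rw [← Functor.map_comp, Linear.smul_comp, Linear.comp_smul, smul_smul, inv_mul_cancel₀ hc,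
    one_smul, id_comp, CategoryTheory.Functor.map_id]

section HomFamilies

variable {Y X : C}

def HomSpans {n : ℕ} (φ : Fin n → (Y ⟶ X)) : Prop :=
  ∀ ψ : Y ⟶ X, ∃ d : Fin n → (Y ⟶ Y), ∑ i, d i ≫ φ i = ψ

def HomIndependent {n : ℕ} (φ : Fin n → (Y ⟶ X)) : Prop :=
  ∀ d : Fin n → (Y ⟶ Y), ∑ i, d i ≫ φ i = 0 → ∀ i, d i = 0

lemma exists_homSpans (hfin : FiniteDimensional k (Y ⟶ X)) :
    ∃ (m : ℕ) (φ : Fin m → (Y ⟶ X)), HomSpans φ := by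
  obtain ⟨m, v, hv⟩ := Module.Finite.exists_fin (R := k) (M := Y ⟶ X)
  refine ⟨m, v, fun ψ => ?_⟩
  obtain ⟨c, hc⟩ := (Submodule.mem_span_range_iff_exists_fun k).1 (hv ▸ Submodule.mem_top : ψ ∈ _)
  exact ⟨fun i => c i • 𝟙 Y, by simp [Linear.smul_comp, hc]⟩

lemma HomSpans.succAbove {m : ℕ} {φ : Fin (m + 1) → (Y ⟶ X)} (hφ : HomSpans φ)
    {d : Fin (m + 1) → (Y ⟶ Y)} (hd : ∑ i, d i ≫ φ i = 0) {j : Fin (m + 1)} {u : Y ⟶ Y}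
    (hu : u ≫ d j = 𝟙 Y) : HomSpans (fun i => φ (j.succAbove i)) := by
  have hφj : φ j = -∑ i, (u ≫ d (j.succAbove i)) ≫ φ (j.succAbove i) := by
    rw [Fin.sum_univ_succAbove _ j] at hd
    calc φ j = u ≫ d j ≫ φ j := by rw [← assoc, hu, id_comp]
      _ = u ≫ (-∑ i, d (j.succAbove i) ≫ φ (j.succAbove i)) := by
        rw [eq_neg_of_add_eq_zero_left hd]
      _ = _ := by simp [Preadditive.comp_sum]
  intro ψ
  obtain ⟨e, rfl⟩ := hφ ψ
  refine ⟨fun i => e (j.succAbove i) - e j ≫ u ≫ d (j.succAbove i), ?_⟩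
  rw [Fin.sum_univ_succAbove _ j, hφj]
  simp [Preadditive.sub_comp, Preadditive.comp_sum, Finset.sum_sub_distrib]
  abel

lemma exists_homSpans_homIndependent (hdiv : ∀ f : Y ⟶ Y, f ≠ 0 → ∃ u, u ≫ f = 𝟙 Y)
    {m : ℕ} {φ : Fin m → (Y ⟶ X)} (hφ : HomSpans φ) :
    ∃ (n : ℕ) (φ' : Fin n → (Y ⟶ X)), HomSpans φ' ∧ HomIndependent φ' := by
  induction m with
  | zero => exact ⟨0, φ, hφ, fun _ _ i => i.elim0⟩
  | succ m ih =>
    by_cases hind : HomIndependent φ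
    · exact ⟨_, φ, hφ, hind⟩
    · simp only [HomIndependent, not_forall] at hind
      obtain ⟨d, hd, j, hj⟩ := hind
      obtain ⟨u, hu⟩ := hdiv _ hj
      exact ih (hφ.succAbove hd hu)

end HomFamilies

lemma finite_setOf_shift_hom_ne_zero {E X : C}
    (h : {t : ℤ | ∃ f : E ⟶ X⟦t⟧, f ≠ 0}.Finite) : {t : ℤ | ∃ f : E⟦t⟧ ⟶ X, f ≠ 0}.Finite :=
  (h.preimage neg_injective.injOn).subset fun _ ⟨f, hf⟩ => by
    by_contra hneg
    exact hf (eq_zero_of_forall_eq_zero_shift (fun g => by_contra fun hg => hneg ⟨g, hg⟩) f)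

/- Bases over `End (E⟦s⟧)` rather than over `k`: the shift functors are not assumed `k`-linear,
so `End (E⟦s⟧)` need not be `k • 𝟙`. -/
lemma shift_exists_homSpans_homIndependent {E : C} (hexc₀ : ∀ f : E ⟶ E, ∃ c : k, f = c • 𝟙 E)
    (s : ℤ) {X : C} (hfin : FiniteDimensional k (E⟦s⟧ ⟶ X)) :
    ∃ (n : ℕ) (φ : Fin n → (E⟦s⟧ ⟶ X)), HomSpans φ ∧ HomIndependent φ := by
  obtain ⟨m, φ, hφ⟩ := exists_homSpans k hfin
  exact exists_homSpans_homIndependent (shift_exists_comp_eq_id_of_ne_zero k hexc₀) hφ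

abbrev shiftFamily (E : C) (S : Finset ℤ) (n : ℤ → ℕ) (j : Σ s : S, Fin (n s)) : C :=
  E⟦(j.1 : ℤ)⟧

noncomputable abbrev shiftSum (E : C) (S : Finset ℤ) (n : ℤ → ℕ) : C :=
  ⨁ shiftFamily E S n

lemma isGen_shiftSum {E : C} {S : Finset ℤ} {n : ℤ → ℕ} : isGen {E} (shiftSum E S n) :=
  isGen.biproduct fun _ => isGen.shift _ (isGen.of rfl)

namespace shiftSum

variable {E X : C} {S : Finset ℤ} {n : ℤ → ℕ}

noncomputable def desc (φ : ∀ s : ℤ, Fin (n s) → (E⟦s⟧ ⟶ X)) : shiftSum E S n ⟶ X :=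
  biproduct.desc fun j => φ j.1 j.2

lemma exists_comp_desc_eq {φ : ∀ s : ℤ, Fin (n s) → (E⟦s⟧ ⟶ X)} {t : ℤ} (ht : t ∈ S)
    (hφ : HomSpans (φ t)) (f : E⟦t⟧ ⟶ X) : ∃ ψ, ψ ≫ desc (S := S) φ = f := by
  obtain ⟨d, rfl⟩ := hφ f
  exact ⟨∑ i, d i ≫ biproduct.ι (shiftFamily E S n) ⟨⟨t, ht⟩, i⟩,
    by simp [desc, Preadditive.sum_comp]⟩

lemma eq_zero_of_comp_desc_eq_zero (hexc₁ : ∀ t : ℤ, t ≠ 0 → ∀ f : E ⟶ E⟦t⟧, f = 0)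
    {φ : ∀ s : ℤ, Fin (n s) → (E⟦s⟧ ⟶ X)} (hφ : ∀ s, HomIndependent (φ s)) {t : ℤ}
    (ψ : E⟦t⟧ ⟶ shiftSum E S n) (h : ψ ≫ desc φ = 0) : ψ = 0 := by
  have hvanish : ∀ j : (Σ s : S, Fin (n s)), (j.1 : ℤ) ≠ t → ψ ≫ biproduct.π _ j = 0 :=
    fun j hj => shift_hom_eq_zero_of_ne hexc₁ hj.symm _
  refine biproduct.hom_ext _ _ fun j => ?_
  obtain ⟨⟨s, hs⟩, i⟩ := j
  rw [zero_comp]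
  by_cases hst : s = t
  · subst hst
    refine hφ s (fun i => ψ ≫ biproduct.π (shiftFamily E S n) ⟨⟨s, hs⟩, i⟩) ?_ i
    have hψ : ψ = biproduct.lift fun j => ψ ≫ biproduct.π _ j := by ext; simp
    rwa [hψ, desc, biproduct.lift_desc, Fintype.sum_sigma,
      Fintype.sum_eq_single (⟨s, hs⟩ : S) fun s' hs' => Finset.sum_eq_zero fun i _ => by
        rw [hvanish _ fun h => hs' (Subtype.ext h), zero_comp]] at h
  · exact hvanish _ hst

end shiftSum

lemma mem_rightOrthogonal_of_distTriang {E A X B : C} {ev : A ⟶ X} {g : X ⟶ B}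
    {h : B ⟶ A⟦(1 : ℤ)⟧} (hT : Triangle.mk ev g h ∈ distTriang C)
    (hsurj : ∀ t : ℤ, ∀ φ : E⟦t⟧ ⟶ X, ∃ ψ : E⟦t⟧ ⟶ A, ψ ≫ ev = φ)
    (hinj : ∀ t : ℤ, ∀ ψ : E⟦t⟧ ⟶ A, ψ ≫ ev = 0 → ψ = 0) :
    B ∈ rightOrthogonal {E} := by
  intro E' hE t f
  rw [Set.mem_singleton_iff] at hE
  subst E'
  have h12 : ev ≫ g = 0 := comp_distTriang_mor_zero₁₂ _ hT
  have h31 : h ≫ ev⟦(1 : ℤ)⟧' = 0 := comp_distTriang_mor_zero₃₁ _ hT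
  have hfh : f ≫ h = 0 := by
    refine eq_zero_of_comp_shift_map_eq_zero (fun ψ hψ => ?_) _ (by rw [assoc, h31, comp_zero])
    let e := (shiftFunctorAdd C t (-1)).app E
    rw [← cancel_epi e.hom, comp_zero, hinj (t + -1) (e.hom ≫ ψ) (by rw [assoc, hψ, comp_zero])]
  obtain ⟨w, hw⟩ := Triangle.coyoneda_exact₃ _ hT f hfh
  obtain ⟨ψ, rfl⟩ := hsurj t w
  rw [hw]
  exact (assoc ψ ev g).trans (by rw [h12, comp_zero])

lemma exists_isGen_hom_bijective_on_shifts (E X : C)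
    (hfin : ∀ s : ℤ, FiniteDimensional k (E⟦s⟧ ⟶ X))
    (hsupp : {t : ℤ | ∃ f : E⟦t⟧ ⟶ X, f ≠ 0}.Finite)
    (hexc₀ : ∀ f : E ⟶ E, ∃ c : k, f = c • 𝟙 E)
    (hexc₁ : ∀ t : ℤ, t ≠ 0 → ∀ f : E ⟶ E⟦t⟧, f = 0) :
    ∃ (A : C) (ev : A ⟶ X), isGen {E} A ∧
      (∀ t : ℤ, ∀ φ : E⟦t⟧ ⟶ X, ∃ ψ : E⟦t⟧ ⟶ A, ψ ≫ ev = φ) ∧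
      ∀ t : ℤ, ∀ ψ : E⟦t⟧ ⟶ A, ψ ≫ ev = 0 → ψ = 0 := by
  choose n φ hspan hind using fun s =>
    shift_exists_homSpans_homIndependent k hexc₀ s (hfin s)
  refine ⟨shiftSum E hsupp.toFinset n, shiftSum.desc φ, isGen_shiftSum, fun t f => ?_,
    fun t ψ => shiftSum.eq_zero_of_comp_desc_eq_zero hexc₁ hind ψ⟩
  by_cases ht : t ∈ hsupp.toFinset
  · exact shiftSum.exists_comp_desc_eq ht (hspan t) f
  · simp only [Set.Finite.mem_toFinset, Set.mem_ofPred_eq, not_exists, not_not] at ht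
    exact ⟨0, by rw [zero_comp, ht f]⟩

/-- for an exceptional object `E` in a `k`-linear triangulated category with
finite-dimensional graded Hom spaces, the triangulated subcategory generated by `E` is
admissible: every `X` admits a distinguished triangle `A → X → B → A⟦1⟧` where `A` is
the (finite) direct sum `⊕ₜ Hom(E, X⟦t⟧) ⊗ E⟦-t⟧` -- characterized by lying in the
subcategory generated by `E` and the map `ev : A ⟶ X` inducing surjections on all
`Hom(E⟦t⟧, -)` -- and the cone `B` lies in the right orthogonal `E^⊥`. -/
theorem stmt2 (E : C)
    (hfin : ∀ X Y : C, FiniteDimensional k (X ⟶ Y))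
    (hgrfin : ∀ X : C, {t : ℤ | ∃ f : E ⟶ X⟦t⟧, f ≠ 0}.Finite)
    (hexc₀ : ∀ f : E ⟶ E, ∃ c : k, f = c • 𝟙 E)
    (hexc₁ : ∀ t : ℤ, t ≠ 0 → ∀ f : E ⟶ E⟦t⟧, f = 0) :
    ∀ X : C, ∃ (A B : C) (ev : A ⟶ X) (g : X ⟶ B) (h : B ⟶ A⟦(1 : ℤ)⟧),
      isGen {E} A ∧
      (∀ t : ℤ, ∀ φ : E⟦t⟧ ⟶ X, ∃ ψ : E⟦t⟧ ⟶ A, ψ ≫ ev = φ) ∧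
      (Triangle.mk ev g h ∈ distTriang C) ∧
      B ∈ rightOrthogonal {E} := by
  intro X
  obtain ⟨A, ev, hA, hsurj, hinj⟩ := exists_isGen_hom_bijective_on_shifts k E X
    (fun _ => hfin _ X) (finite_setOf_shift_hom_ne_zero (hgrfin X)) hexc₀ hexc₁
  obtain ⟨B, g, h, hT⟩ := distinguished_cocone_triangle ev
  exact ⟨A, B, ev, g, h, hA, hsurj, hT, mem_rightOrthogonal_of_distTriang hT hsurj hinj⟩
end

section
/- Let T be a connected Calabi–Yau triangulated category, i.e., a k-linear triangulated category with Serre functor isomorphic to the shift [n] for some integer n, and with zeroth Hochschild cohomology (endomorphisms of the identity functor in degree 0) equal to k. Then T admits no nontrivial semiorthogonal decomposition: if T = ⟨A, B⟩ then A = 0 or B = 0. -/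
/-!
Serre duality with `S ≅ [n]` turns `Hom(B, A[n]) = 0` into `Hom(A, B) = 0`, so the two halves
of the decomposition are mutually orthogonal. The connecting morphism of a triangle whose outer
terms split as `a ⊕ b` is then diagonal, so the triangle is a sum of a triangle in `A` and one in
`B`; hence every object splits as `a ⊕ b`. The projections onto the `A`-summands form an
endomorphism of the identity functor that is `1` on `A` and `0` on `B`. As it is a scalar, `A`
or `B` vanishes.
-/

open CategoryTheory Category Limits Pretriangulated

universe v u

variable {C : Type u} [Category.{v} C] [Preadditive C] [HasZeroObject C]
  [HasShift C ℤ] [∀ n : ℤ, (CategoryTheory.shiftFunctor C n).Additive] [Pretriangulated C]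

/-- Serre functor data on a `k`-linear category: an autoequivalence `S` with
(bifunctorial) isomorphisms `Hom(X,Y) ≅ Hom(Y, S X)^∨`. -/
structure SerreData (k : Type*) [Field k] (D : Type*) [Category D] [Preadditive D]
    [CategoryTheory.Linear k D] : Type _ where
  S : D ⥤ D
  isEquiv : S.IsEquivalence
  duality : ∀ X Y : D, (X ⟶ Y) ≃ₗ[k] Module.Dual k (Y ⟶ S.obj X)

variable (k : Type*) [Field k] [Linear k C]

section Preadditive

variable {D : Type*} [Category D] [Preadditive D]

def HomVanish (A B : Set D) : Prop :=
  ∀ a ∈ A, ∀ b ∈ B, ∀ g : a ⟶ b, g = 0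

lemma HomVanish.eq_zero_of_ne {A B : Set D} (hAB : HomVanish A B) (hBA : HomVanish B A)
    {f f' : Bool → D} (hfA : f true ∈ A) (hfB : f false ∈ B) (hf'A : f' true ∈ A)
    (hf'B : f' false ∈ B) {i j : Bool} (hij : i ≠ j) (g : f i ⟶ f' j) : g = 0 := by
  cases i <;> cases j
  · exact absurd rfl hij
  · exact hBA _ hfB _ hf'A g
  · exact hAB _ hfA _ hf'B g
  · exact absurd rfl hij

variable [HasFiniteBiproducts D] {J : Type*} [Finite J] {f : J → D}

lemma biproduct.π_comp_ι_comp_eq_self {Z : D} (j : J) (g : ⨁ f ⟶ Z)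
    (h : ∀ i, i ≠ j → biproduct.ι f i ≫ g = 0) :
    biproduct.π f j ≫ biproduct.ι f j ≫ g = g := by
  classical
  refine biproduct.hom_ext' _ _ fun i => ?_
  by_cases hij : i = j
  · subst hij
    simp
  · simp [biproduct.ι_π_ne_assoc _ hij, h i hij]

lemma biproduct.comp_π_comp_ι_eq_self {Z : D} (j : J) (g : Z ⟶ ⨁ f)
    (h : ∀ i, i ≠ j → g ≫ biproduct.π f i = 0) :
    g ≫ biproduct.π f j ≫ biproduct.ι f j = g := by
  classical
  refine biproduct.hom_ext _ _ fun i => ?_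
  by_cases hij : i = j
  · subst hij
    simp
  · simp [biproduct.ι_π_ne _ (Ne.symm hij), h i hij]

lemma biproduct.comp_π_comp_ι_eq_π_comp_ι_comp {f' : J → D} (g : ⨁ f ⟶ ⨁ f')
    (h : ∀ i j, i ≠ j → biproduct.ι f i ≫ g ≫ biproduct.π f' j = 0) (j : J) :
    g ≫ biproduct.π f' j ≫ biproduct.ι f' j = biproduct.π f j ≫ biproduct.ι f j ≫ g := by
  rw [← biproduct.π_comp_ι_comp_eq_self j (g ≫ _) fun i hi => by simp [reassoc_of% h i j hi],
    ← biproduct.comp_π_comp_ι_eq_self j (biproduct.ι f j ≫ g) fun i hi => by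
      simp [h j i (Ne.symm hi)]]
  simp

variable (f) in
noncomputable def biproduct.isoOfIsZero (j : J) (h : ∀ i, i ≠ j → IsZero (f i)) : f j ≅ ⨁ f where
  hom := biproduct.ι f j
  inv := biproduct.π f j
  inv_hom_id := by
    simpa using biproduct.π_comp_ι_comp_eq_self j (𝟙 (⨁ f)) fun i hi => (h i hi).eq_of_src _ _

def IsDirectSum (A B : Set D) (X : D) : Prop :=
  ∃ f : Bool → D, f true ∈ A ∧ f false ∈ B ∧ Nonempty (X ≅ ⨁ f)

lemma IsDirectSum.of_iso {A B : Set D} {X Y : D} (e : X ≅ Y) (hX : IsDirectSum A B X) :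
    IsDirectSum A B Y := by
  obtain ⟨f, hA, hB, ⟨e'⟩⟩ := hX
  exact ⟨f, hA, hB, ⟨e.symm ≪≫ e'⟩⟩

lemma exists_natTrans_projection_of_isDirectSum {A B : Set D} (hAB : HomVanish A B)
    (hBA : HomVanish B A) (h : ∀ X, IsDirectSum A B X) :
    ∃ η : 𝟭 D ⟶ 𝟭 D, (∀ a ∈ A, η.app a = 𝟙 a) ∧ ∀ b ∈ B, η.app b = 0 := by
  choose f hfA hfB e using h
  replace e := fun X => (e X).some
  refine ⟨{ app := fun X => (e X).hom ≫ biproduct.π _ true ≫ biproduct.ι _ true ≫ (e X).inv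
            naturality := fun X Y g => ?_ }, fun a ha => ?_, fun b hb => ?_⟩
  · have := biproduct.comp_π_comp_ι_eq_π_comp_ι_comp ((e X).inv ≫ g ≫ (e Y).hom)
      (fun i j hij => hAB.eq_zero_of_ne hBA (hfA X) (hfB X) (hfA Y) (hfB Y) hij _) true
    simpa using (e X).hom ≫= this =≫ (e Y).inv
  · have hι : ∀ i, i ≠ true → biproduct.ι (f a) i ≫ (e a).inv = 0 := by
      intro i hi
      obtain rfl : i = false := by simpa using hi
      exact hBA _ (hfB a) _ ha _
    dsimp only
    rw [biproduct.π_comp_ι_comp_eq_self true (e a).inv hι]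
    exact (e a).hom_inv_id
  · dsimp only
    rw [reassoc_of% hBA b hb _ (hfA b) ((e b).hom ≫ biproduct.π _ true), zero_comp]

end Preadditive

lemma exists_iso_biproduct_of_distTriang {J : Type*} [Finite J] (T : Triangle C)
    (hT : T ∈ distTriang C) {f₁ f₃ : J → C} (e₁ : T.obj₁ ≅ ⨁ f₁) (e₃ : T.obj₃ ≅ ⨁ f₃)
    (h : ∀ i j, i ≠ j → ∀ g : f₃ i ⟶ (f₁ j)⟦(1 : ℤ)⟧, g = 0) :
    ∃ f₂ : J → C, (∀ j, ∃ (u : f₁ j ⟶ f₂ j) (v : f₂ j ⟶ f₃ j) (w : f₃ j ⟶ (f₁ j)⟦(1 : ℤ)⟧),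
      Triangle.mk u v w ∈ distTriang C) ∧ Nonempty (T.obj₂ ≅ ⨁ f₂) := by
  let g : ∀ j, ⨁ f₃ ⟶ (f₁ j)⟦(1 : ℤ)⟧ := fun j =>
    e₃.inv ≫ T.mor₃ ≫ (e₁.hom ≫ biproduct.π f₁ j)⟦(1 : ℤ)⟧'
  -- `T` is isomorphic to the product of triangles on the diagonal components of `T.mor₃`.
  choose f₂ u v hT' using fun j => distinguished_cocone_triangle₂ (biproduct.ι f₃ j ≫ g j)
  let P := productTriangle fun j => Triangle.mk (u j) (v j) (biproduct.ι f₃ j ≫ g j)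
  have hP : P ∈ distTriang C := productTriangle_distinguished _ hT'
  have comm : T.mor₃ ≫ (e₁ ≪≫ biproduct.isoProduct f₁).hom⟦(1 : ℤ)⟧' =
      (e₃ ≪≫ biproduct.isoProduct f₃).hom ≫ Limits.Pi.map (fun j => biproduct.ι f₃ j ≫ g j) ≫
        inv (piComparison (shiftFunctor C (1 : ℤ)) f₁) := by
    rw [← cancel_mono (piComparison (shiftFunctor C (1 : ℤ)) f₁), assoc, assoc, assoc,
      IsIso.inv_hom_id, comp_id]
    refine Pi.hom_ext _ _ fun j => ?_
    have hg := biproduct.π_comp_ι_comp_eq_self j (g j) fun i hi => h i j hi _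
    simp only [g, Functor.map_comp] at hg
    simp [g, hg]
  exact ⟨f₂, fun j => ⟨u j, v j, _, hT' j⟩,
    ⟨Triangle.π₂.mapIso (isoTriangleOfIso₁₃ T P hT hP _ _ comm) ≪≫
      (biproduct.isoProduct f₂).symm⟩⟩

open ZeroObject

namespace IsDirectSum

variable {A B : Set C}

lemma of_mem_left (hB : IsTriangulatedSub B) {a : C} (ha : a ∈ A) : IsDirectSum A B a :=
  ⟨_, ha, hB.zero _ (isZero_zero C),
    ⟨biproduct.isoOfIsZero (fun j => bif j then a else 0) true fun i hi => by
      obtain rfl : i = false := by simpa using hi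
      exact isZero_zero C⟩⟩

lemma of_mem_right (hA : IsTriangulatedSub A) {b : C} (hb : b ∈ B) : IsDirectSum A B b :=
  ⟨_, hA.zero _ (isZero_zero C), hb,
    ⟨biproduct.isoOfIsZero (fun j => bif j then 0 else b) false fun i hi => by
      obtain rfl : i = true := by simpa using hi
      exact isZero_zero C⟩⟩

lemma shift (hA : IsTriangulatedSub A) (hB : IsTriangulatedSub B) {X : C}
    (hX : IsDirectSum A B X) (m : ℤ) : IsDirectSum A B (X⟦m⟧) := by
  obtain ⟨f, hfA, hfB, ⟨e⟩⟩ := hX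
  exact ⟨fun j => (f j)⟦m⟧, hA.shift _ hfA m, hB.shift _ hfB m,
    ⟨(shiftFunctor C m).mapIso e ≪≫ (shiftFunctor C m).mapBiproduct f⟩⟩

lemma ext (hA : IsTriangulatedSub A) (hB : IsTriangulatedSub B) (hAB : HomVanish A B)
    (hBA : HomVanish B A) (T : Triangle C) (hT : T ∈ distTriang C)
    (h₁ : IsDirectSum A B T.obj₁) (h₃ : IsDirectSum A B T.obj₃) : IsDirectSum A B T.obj₂ := by
  obtain ⟨f₁, h₁A, h₁B, ⟨e₁⟩⟩ := h₁
  obtain ⟨f₃, h₃A, h₃B, ⟨e₃⟩⟩ := h₃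
  obtain ⟨f₂, hf₂, he₂⟩ := exists_iso_biproduct_of_distTriang T hT e₁ e₃ fun i j hij =>
    hAB.eq_zero_of_ne hBA (f' := fun j => (f₁ j)⟦(1 : ℤ)⟧) h₃A h₃B (hA.shift _ h₁A 1)
      (hB.shift _ h₁B 1) hij
  obtain ⟨_, _, _, hTA⟩ := hf₂ true
  obtain ⟨_, _, _, hTB⟩ := hf₂ false
  exact ⟨f₂, hA.ext _ hTA h₁A h₃A, hB.ext _ hTB h₁B h₃B, he₂⟩

end IsDirectSum

lemma isDirectSum_of_isGen {A B : Set C} (hA : IsTriangulatedSub A) (hB : IsTriangulatedSub B)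
    (hAB : HomVanish A B) (hBA : HomVanish B A) {X : C} (hX : isGen (A ∪ B) X) :
    IsDirectSum A B X := by
  induction hX with
  | of hX => exact hX.elim (IsDirectSum.of_mem_left hB) (IsDirectSum.of_mem_right hA)
  | zero hX => exact IsDirectSum.of_mem_left hB (hA.zero _ hX)
  | iso e _ ih => exact ih.of_iso e
  | shift m _ ih => exact ih.shift hA hB m
  | ext T hT _ _ ih₁ ih₃ => exact IsDirectSum.ext hA hB hAB hBA T hT ih₁ ih₃

lemma SerreData.eq_zero_of_forall_eq_zero {K D : Type*} [Field K] [Category D] [Preadditive D]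
    [Linear K D] (SD : SerreData K D) {X Y : D} (h : ∀ g : Y ⟶ SD.S.obj X, g = 0)
    (f : X ⟶ Y) : f = 0 :=
  (SD.duality X Y).injective (LinearMap.ext fun g => by simp [h g])

theorem stmt7 (SD : SerreData k C) (n : ℤ)
    (hCY : Nonempty (SD.S ≅ CategoryTheory.shiftFunctor C n))
    (hHH0 : ∀ η : 𝟭 C ⟶ 𝟭 C, ∃ c : k, η = c • 𝟙 (𝟭 C))
    (A B : Set C) (hA : IsTriangulatedSub A) (hB : IsTriangulatedSub B)
    (hsemi : ∀ b ∈ B, ∀ a ∈ A, ∀ t : ℤ, ∀ f : b ⟶ a⟦t⟧, f = 0)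
    (hgen : ∀ X : C, isGen (A ∪ B) X) :
    (∀ X ∈ A, Limits.IsZero X) ∨ (∀ X ∈ B, Limits.IsZero X) := by
  obtain ⟨e⟩ := hCY
  have hBA : HomVanish B A := fun b hb a ha g =>
    (cancel_mono ((shiftFunctorZero C ℤ).inv.app a)).1 <| by
      rw [hsemi b hb a ha 0 (g ≫ _), zero_comp]
  have hAB : HomVanish A B := fun a ha b hb =>
    SD.eq_zero_of_forall_eq_zero fun g =>
      (cancel_mono (e.hom.app a)).1 (by rw [hsemi b hb a ha n (g ≫ _), zero_comp])
  obtain ⟨η, hηA, hηB⟩ := exists_natTrans_projection_of_isDirectSum hAB hBA fun X =>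
    isDirectSum_of_isGen hA hB hAB hBA (hgen X)
  obtain ⟨c, rfl⟩ := hHH0 η
  by_cases hc : c = 0
  · refine Or.inl fun a ha => ?_
    rw [IsZero.iff_id_eq_zero, ← hηA a ha, hc, zero_smul, NatTrans.app_zero]
  · refine Or.inr fun b hb => ?_
    have := hηB b hb
    rw [NatTrans.app_smul, NatTrans.id_app, smul_eq_zero] at this
    exact (IsZero.iff_id_eq_zero b).2 (this.resolve_left hc)
end

section
/- If composable resolutions are given, i.e., a resolution π : Ỹ → Y factors as Ỹ →^f Ỹ' →^{π'} Y with f proper birational between smooth varieties, then Rπ_* ∘ Lf* ≅ Rπ'_*; consequently the categorical resolution (D^b(coh Ỹ), Rπ_*, Lπ*) dominates (D^b(coh Ỹ'), Rπ'_*, Lπ'*) via the fully faithful functor Lf*. -/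
open CategoryTheory

universe v u

def CategoryTheory.Functor.compIsoOfCompIsoIdOfIsoComp {C D E : Type*} [Category C] [Category D]
    [Category E] {L : C ⥤ D} {R : D ⥤ C} (i : L ⋙ R ≅ 𝟭 C) {G : D ⥤ E} {F : C ⥤ E}
    (j : G ≅ R ⋙ F) : L ⋙ G ≅ F :=
  Functor.isoWhiskerLeft L j ≪≫ (Functor.associator L R F).symm ≪≫
    Functor.isoWhiskerRight i F ≪≫ F.leftUnitor

/-- compatibility of categorical resolutions with composition of geometric
resolutions.  `D`, `D'`, `E` model `D^b(coh Ỹ)`, `D^b(coh Ỹ')` and `D^b(coh Y)` for a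
resolution `π : Ỹ → Y` factoring as `Ỹ →^f Ỹ' →^{π'} Y` with `f` proper birational
between smooth varieties.  `fpull = Lf*`, `fstar = Rf_*` (an adjoint pair), with
`Rf_* O_Ỹ = O_{Ỹ'}` giving `Rf_* ∘ Lf* ≅ id`; `πst = Rπ_*`, `π'st = Rπ'_*`, and
`Rπ_* = Rπ'_* ∘ Rf_*` since `π = π' ∘ f`.  Conclusion: `Rπ_* ∘ Lf* ≅ Rπ'_*`, and `Lf*`
is fully faithful, so the categorical resolution `(D^b(coh Ỹ), Rπ_*, Lπ*)` dominates
`(D^b(coh Ỹ'), Rπ'_*, Lπ'*)` via `ε = Lf*`. -/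
theorem stmt19
    (D D' E : Type u) [Category.{v} D] [Category.{v} D'] [Category.{v} E]
    (fpull : D' ⥤ D) (fstar : D ⥤ D') (adj : fpull ⊣ fstar)
    (hO : Nonempty (fpull ⋙ fstar ≅ 𝟭 D'))
    (πst : D ⥤ E) (π'st : D' ⥤ E)
    (hfac : Nonempty (πst ≅ fstar ⋙ π'st)) :
    Nonempty (fpull ⋙ πst ≅ π'st) ∧ fpull.Full ∧ fpull.Faithful := by
  obtain ⟨retraction⟩ := hO
  obtain ⟨factorIso⟩ := hfac
  have fullyFaithful := adj.fullyFaithfulLOfCompIsoId retraction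
  exact ⟨⟨Functor.compIsoOfCompIsoIdOfIsoComp retraction factorIso⟩,
    fullyFaithful.full, fullyFaithful.faithful⟩
end
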